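/- arXiv:1710.08515 — 3 statements merged into one kernel-verified Lean document; each statement's English description precedes it below -/
import Mathlib

section
/- Let f be a real-valued locally integrable function on ℝⁿ and ℬ a basis of measurable sets of positive finite measure. If sup_{B ∈ ℬ} avg_B e^{|f - f_B|} = C₀ < ∞, then ‖f‖_{𝒷ℳ𝒪_ℬ} := sup_{B ∈ ℬ} ‖f - f_B‖_{exp L, B} ≤ max{1, log₂ C₀}. -/
open MeasureTheory

noncomputable section

/-- Average of `f` over `B` with respect to `μ`. -/
def avgm {X : Type*} [MeasurableSpace X] (μ : Measure X) (B : Set X) (f : X → ℝ) : ℝ :=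
  (μ B).toReal⁻¹ * ∫ x in B, f x ∂μ

/-- Localized normalized `exp L` norm of `f` on `B`. -/
def expLNorm {X : Type*} [MeasurableSpace X] (μ : Measure X) (B : Set X) (f : X → ℝ) : ℝ :=
  sInf {l : ℝ | 0 < l ∧ avgm μ B (fun x => Real.exp (|f x| / l)) ≤ 2}

/-- Axis-parallel cubes in `ℝⁿ`. -/
def IsCube {n : ℕ} (Q : Set (Fin n → ℝ)) : Prop :=
  ∃ (c : Fin n → ℝ) (h : ℝ), 0 < h ∧ Q = Set.univ.pi fun i => Set.Icc (c i) (c i + h)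

/-- Average over a subset of `ℝⁿ` with respect to Lebesgue measure. -/
def avgQ {n : ℕ} (Q : Set (Fin n → ℝ)) (f : (Fin n → ℝ) → ℝ) : ℝ :=
  avgm MeasureTheory.volume Q f

/-- `‖f - f_Q‖_{exp L, Q}`. -/
def oscExp {n : ℕ} (Q : Set (Fin n → ℝ)) (f : (Fin n → ℝ) → ℝ) : ℝ :=
  expLNorm MeasureTheory.volume Q (fun x => f x - avgQ Q f)

def bmoSet {n : ℕ} (f : (Fin n → ℝ) → ℝ) : Set ℝ :=
  {r | ∃ Q : Set (Fin n → ℝ), IsCube Q ∧ r = oscExp Q f}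

/-- `‖f‖_{𝒷ℳ𝒪} = sup_Q ‖f - f_Q‖_{exp L, Q}`. -/
def calBMONorm {n : ℕ} (f : (Fin n → ℝ) → ℝ) : ℝ := sSup (bmoSet f)

def FiniteBMO {n : ℕ} (f : (Fin n → ℝ) → ℝ) : Prop := BddAbove (bmoSet f)

/-- The `A_p` ratio of the weight `w` over the cube `Q` (for `1 < p < ∞`). -/
def apRatio {n : ℕ} (p : ℝ) (w : (Fin n → ℝ) → ℝ) (Q : Set (Fin n → ℝ)) : ℝ :=
  avgQ Q w * (avgQ Q fun x => w x ^ (1 - p / (p - 1))) ^ (p - 1)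

def apSet {n : ℕ} (p : ℝ) (w : (Fin n → ℝ) → ℝ) : Set ℝ :=
  {r | ∃ Q, IsCube Q ∧ r = apRatio p w Q}

/-- The Muckenhoupt constant `[w]_{A_p}`. -/
def apConst {n : ℕ} (p : ℝ) (w : (Fin n → ℝ) → ℝ) : ℝ := sSup (apSet p w)

/-- Membership in the Muckenhoupt class `A_p`, `1 < p < ∞`. -/
def MemAp {n : ℕ} (p : ℝ) (w : (Fin n → ℝ) → ℝ) : Prop := BddAbove (apSet p w)

/-! Jensen's inequality for the concave map `t ↦ t ^ (1/λ)` gives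
`avg_B e^{|g|/λ} ≤ (avg_B e^{|g|})^{1/λ} ≤ C₀^{1/λ}` for `λ ≥ 1`, and the choice
`λ = max 1 (log₂ C₀)` makes the right-hand side at most `2`. When the average is not a genuine
one (`μ B ∈ {0, ∞}` or `e^{|g|}` not integrable on `B`) it is `0`, so `λ = 1` is admissible. -/

namespace ExpLNorm

open Real

variable {X : Type*} [MeasurableSpace X] {μ : Measure X} {B : Set X} {g : X → ℝ}

theorem avgm_eq_setAverage (f : X → ℝ) : avgm μ B f = ⨍ x in B, f x ∂μ := by
  rw [avgm, setAverage_eq, smul_eq_mul, measureReal_def]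

theorem expLNorm_le_of_avgm_le {l : ℝ} (hl : 0 < l)
    (h : avgm μ B (fun x => exp (|g x| / l)) ≤ 2) : expLNorm μ B g ≤ l :=
  csInf_le ⟨0, fun _ hx => hx.1.le⟩ ⟨hl, h⟩

theorem one_le_average_exp_abs [IsFiniteMeasure μ] [NeZero μ]
    (hg : Integrable (fun x => exp |g x|) μ) : 1 ≤ ⨍ x, exp |g x| ∂μ := by
  obtain ⟨x, hx⟩ := exists_le_average (NeZero.ne μ) hg
  exact (one_le_exp (abs_nonneg _)).trans hx

theorem average_exp_abs_div_le [IsFiniteMeasure μ] [NeZero μ]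
    (hg : Integrable (fun x => exp |g x|) μ) {l : ℝ} (hl : 1 ≤ l) :
    ⨍ x, exp (|g x| / l) ∂μ ≤ (⨍ x, exp |g x| ∂μ) ^ l⁻¹ := by
  have hp0 : 0 ≤ l⁻¹ := inv_nonneg.2 (zero_le_one.trans hl)
  have hp1 : l⁻¹ ≤ 1 := inv_le_one_of_one_le₀ hl
  have hpow : Continuous fun t : ℝ => t ^ l⁻¹ := continuous_rpow_const hp0
  simp_rw [div_eq_mul_inv, exp_mul]
  refine (concaveOn_rpow hp0 hp1).le_map_average hpow.continuousOn isClosed_Ici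
    (ae_of_all _ fun x => (exp_pos _).le) hg ?_
  refine hg.mono (hpow.comp_aestronglyMeasurable hg.aestronglyMeasurable) (ae_of_all _ fun x => ?_)
  have h1 : 1 ≤ exp |g x| := one_le_exp (abs_nonneg _)
  rw [Function.comp_apply, norm_of_nonneg (rpow_nonneg (exp_pos _).le _),
    norm_of_nonneg (exp_pos _).le]
  simpa using rpow_le_rpow_of_exponent_le h1 hp1

theorem rpow_inv_max_one_logb_le_two {C : ℝ} (hC : 1 ≤ C) :
    C ^ (max 1 (logb 2 C))⁻¹ ≤ 2 := by
  have hM : 0 < max 1 (logb 2 C) := one_pos.trans_le (le_max_left _ _)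
  rw [rpow_inv_le_iff_of_pos (zero_le_one.trans hC) zero_le_two hM,
    ← logb_le_iff_le_rpow one_lt_two (one_pos.trans_le hC)]
  exact le_max_right _ _

theorem avgm_eq_zero_of_degenerate (f : X → ℝ)
    (h : ¬(μ B ≠ 0 ∧ μ B ≠ ⊤ ∧ Integrable f (μ.restrict B))) : avgm μ B f = 0 := by
  simp only [not_and_or, not_not] at h
  rcases h with h0 | htop | hf
  · simp [avgm, h0]
  · simp [avgm, htop]
  · simp [avgm, integral_undef hf]

theorem expLNorm_le_max_one_logb {C : ℝ} (h : avgm μ B (fun x => exp |g x|) ≤ C) :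
    expLNorm μ B g ≤ max 1 (logb 2 C) := by
  by_cases hB : μ B ≠ 0 ∧ μ B ≠ ⊤ ∧ Integrable (fun x => exp |g x|) (μ.restrict B)
  · obtain ⟨h0, htop, hint⟩ := hB
    have : IsFiniteMeasure (μ.restrict B) := isFiniteMeasure_restrict.2 htop
    have : NeZero (μ.restrict B) := ⟨by rwa [Ne, Measure.restrict_eq_zero]⟩
    rw [avgm_eq_setAverage] at h
    have hC : 1 ≤ C := (one_le_average_exp_abs hint).trans h
    refine expLNorm_le_of_avgm_le (one_pos.trans_le (le_max_left _ _)) ?_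
    rw [avgm_eq_setAverage]
    calc ⨍ x in B, exp (|g x| / max 1 (logb 2 C)) ∂μ
        ≤ (⨍ x in B, exp |g x| ∂μ) ^ (max 1 (logb 2 C))⁻¹ :=
          average_exp_abs_div_le hint (le_max_left _ _)
      _ ≤ C ^ (max 1 (logb 2 C))⁻¹ := by
          gcongr
          exact zero_le_one.trans (one_le_average_exp_abs hint)
      _ ≤ 2 := rpow_inv_max_one_logb_le_two hC
  · refine (expLNorm_le_of_avgm_le one_pos ?_).trans (le_max_left _ _)
    simp only [div_one, avgm_eq_zero_of_degenerate _ hB, zero_le_two]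

end ExpLNorm

theorem statement4_general {n : ℕ} (f : (Fin n → ℝ) → ℝ)
    (ℬ : Set (Set (Fin n → ℝ)))
    (C₀ : ℝ)
    (hC : ∀ B ∈ ℬ, avgQ B (fun x => Real.exp |f x - avgQ B f|) ≤ C₀) :
    ∀ B ∈ ℬ, expLNorm MeasureTheory.volume B (fun x => f x - avgQ B f) ≤
      max 1 (Real.logb 2 C₀) :=
  fun B hB => ExpLNorm.expLNorm_le_max_one_logb (hC B hB)

/-- If `sup_{B ∈ ℬ} avg_B e^{|f - f_B|} ≤ C₀ < ∞` then
`‖f‖_{𝒷ℳ𝒪_ℬ} ≤ max{1, log₂ C₀}`. -/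
theorem statement4 {n : ℕ} (f : (Fin n → ℝ) → ℝ)
    (hf : LocallyIntegrable f MeasureTheory.volume)
    (ℬ : Set (Set (Fin n → ℝ)))
    (hℬ : ∀ B ∈ ℬ, MeasurableSet B ∧ 0 < MeasureTheory.volume B ∧
      MeasureTheory.volume B < ⊤)
    (C₀ : ℝ)
    (hC : ∀ B ∈ ℬ, avgQ B (fun x => Real.exp |f x - avgQ B f|) ≤ C₀) :
    ∀ B ∈ ℬ, expLNorm MeasureTheory.volume B (fun x => f x - avgQ B f) ≤
      max 1 (Real.logb 2 C₀) :=
  statement4_general f ℬ C₀ hC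
end
end

section
/- Let f be a real-valued locally integrable function on ℝⁿ such that e^f ∈ A₂. Then f ∈ 𝒷ℳ𝒪 with ‖f‖_{𝒷ℳ𝒪} ≤ 1 + log₂([e^f]_{A₂}). -/
open MeasureTheory

noncomputable section

/-! Fix a cube `Q`, put `c = f_Q`, `a = ⨍_Q e^f`, `b = ⨍_Q e^{-f}`. Jensen's inequality for `exp`
gives `e^c ≤ a` and `e^{-c} ≤ b`, so `A = e^{-c} a` and `B = e^c b` are both `≥ 1` and
`AB = ab ≤ [e^f]_{A₂}`. Since `e^{|f - c|} ≤ e^{f - c} + e^{c - f}`, this yields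
`⨍_Q e^{|f - c|} ≤ A + B ≤ 2AB ≤ 2 [e^f]_{A₂} = 2^L` with `L = 1 + log₂ [e^f]_{A₂}`.
Jensen's inequality for the concave map `t ↦ t^{1/L}` then gives
`⨍_Q e^{|f - c|/L} ≤ (⨍_Q e^{|f - c|})^{1/L} ≤ 2`, i.e. `‖f - f_Q‖_{exp L, Q} ≤ L`. -/

section SetAverage

open Real
open scoped ENNReal

variable {X : Type*} [MeasurableSpace X] {μ : Measure X} {Q : Set X}

theorem avgm_eq_setAverage (μ : Measure X) (Q : Set X) (f : X → ℝ) :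
    avgm μ Q f = ⨍ x in Q, f x ∂μ := by
  rw [setAverage_eq, smul_eq_mul, measureReal_def, avgm]

theorem setAverage_of_not_integrableOn {f : X → ℝ} (hf : ¬IntegrableOn f Q μ) :
    ⨍ x in Q, f x ∂μ = 0 := by
  rw [setAverage_eq, integral_undef hf, smul_zero]

theorem exp_setAverage_le_setAverage_exp (hQ₀ : μ Q ≠ 0) (hQ : μ Q ≠ ∞) {f : X → ℝ}
    (hf : IntegrableOn f Q μ) (hexp : IntegrableOn (fun x => exp (f x)) Q μ) :
    exp (⨍ x in Q, f x ∂μ) ≤ ⨍ x in Q, exp (f x) ∂μ :=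
  convexOn_exp.map_set_average_le continuous_exp.continuousOn isClosed_univ hQ₀ hQ
    (by simp) hf hexp

theorem setAverage_rpow_le_rpow_setAverage (hQ₀ : μ Q ≠ 0) (hQ : μ Q ≠ ∞) {h : X → ℝ}
    (h_nonneg : ∀ x, 0 ≤ h x) (hh : IntegrableOn h Q μ) {p : ℝ} (hp₀ : 0 ≤ p) (hp₁ : p ≤ 1)
    (hhp : IntegrableOn (fun x => h x ^ p) Q μ) :
    ⨍ x in Q, h x ^ p ∂μ ≤ (⨍ x in Q, h x ∂μ) ^ p :=
  (Real.concaveOn_rpow hp₀ hp₁).le_map_set_average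
    (continuousOn_id.rpow_const fun _ _ => Or.inr hp₀) isClosed_Ici hQ₀ hQ
    (Filter.Eventually.of_forall h_nonneg) hh hhp

theorem MeasureTheory.IntegrableOn.exp_of_exp_abs_sub {f : X → ℝ} {c : ℝ}
    (hf : AEStronglyMeasurable f (μ.restrict Q)) (h : IntegrableOn (fun x => exp |f x - c|) Q μ) :
    IntegrableOn (fun x => exp (f x)) Q μ := by
  refine (h.const_mul (exp c)).mono' (continuous_exp.comp_aestronglyMeasurable hf)
    (Filter.Eventually.of_forall fun x => ?_)
  rw [norm_of_nonneg (exp_pos _).le, ← exp_add, exp_le_exp]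
  linarith [le_abs_self (f x - c)]

theorem one_le_exp_neg_setAverage_mul_setAverage_exp (hQ₀ : μ Q ≠ 0) (hQ : μ Q ≠ ∞)
    {f : X → ℝ} (hf : IntegrableOn f Q μ) (hexp : IntegrableOn (fun x => exp (f x)) Q μ) :
    1 ≤ exp (-⨍ x in Q, f x ∂μ) * ⨍ x in Q, exp (f x) ∂μ := by
  rw [exp_neg, ← div_eq_inv_mul, one_le_div (exp_pos _)]
  exact exp_setAverage_le_setAverage_exp hQ₀ hQ hf hexp

theorem one_le_exp_setAverage_mul_setAverage_exp_neg (hQ₀ : μ Q ≠ 0) (hQ : μ Q ≠ ∞)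
    {f : X → ℝ} (hf : IntegrableOn f Q μ) (hexp_neg : IntegrableOn (fun x => exp (-f x)) Q μ) :
    1 ≤ exp (⨍ x in Q, f x ∂μ) * ⨍ x in Q, exp (-f x) ∂μ := by
  simpa only [average_neg, neg_neg] using
    one_le_exp_neg_setAverage_mul_setAverage_exp (f := fun x => -f x) hQ₀ hQ hf.neg hexp_neg

theorem expLNorm_le_of_setAverage_exp_abs_le (hQ₀ : μ Q ≠ 0) (hQ : μ Q ≠ ∞) {g : X → ℝ}
    (hg : AEStronglyMeasurable g (μ.restrict Q)) {L : ℝ} (hL : 1 ≤ L)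
    (h : ⨍ x in Q, exp |g x| ∂μ ≤ 2 ^ L) :
    expLNorm μ Q g ≤ L := by
  have hbdd : BddBelow {l : ℝ | 0 < l ∧ avgm μ Q (fun x => exp (|g x| / l)) ≤ 2} :=
    ⟨0, fun l hl => hl.1.le⟩
  by_cases hI : IntegrableOn (fun x => exp |g x|) Q μ
  · refine csInf_le hbdd ⟨by linarith, ?_⟩
    have hpow : ∀ x, exp (|g x| / L) = exp |g x| ^ L⁻¹ := fun x => by
      rw [← exp_mul, div_eq_mul_inv]
    have hIL : IntegrableOn (fun x => exp |g x| ^ L⁻¹) Q μ := by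
      simp only [← hpow]
      refine hI.mono' ((continuous_exp.comp (continuous_abs.div_const L)).comp_aestronglyMeasurable
        hg) (Filter.Eventually.of_forall fun x => ?_)
      rw [norm_of_nonneg (exp_pos _).le, exp_le_exp]
      exact div_le_self (abs_nonneg _) hL
    have havg_nonneg : 0 ≤ ⨍ x in Q, exp |g x| ∂μ := by
      rw [setAverage_eq, smul_eq_mul]
      exact mul_nonneg (inv_nonneg.mpr measureReal_nonneg)
        (integral_nonneg fun x => (exp_pos _).le)
    rw [avgm_eq_setAverage]
    simp only [hpow]
    calc ⨍ x in Q, exp |g x| ^ L⁻¹ ∂μ ≤ (⨍ x in Q, exp |g x| ∂μ) ^ L⁻¹ :=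
          setAverage_rpow_le_rpow_setAverage hQ₀ hQ (fun x => (exp_pos _).le) hI
            (by positivity) (inv_le_one_of_one_le₀ hL) hIL
      _ ≤ (2 ^ L) ^ L⁻¹ := by gcongr
      _ = 2 := by rw [← rpow_mul zero_le_two, mul_inv_cancel₀ (by positivity), rpow_one]
  · refine (csInf_le hbdd ⟨one_pos, ?_⟩).trans hL
    simp only [avgm_eq_setAverage, div_one, setAverage_of_not_integrableOn hI]
    exact zero_le_two

section Centered

variable (hQ₀ : μ Q ≠ 0) (hQ : μ Q ≠ ∞) {f : X → ℝ} (hf : IntegrableOn f Q μ)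
  (hexp : IntegrableOn (fun x => exp (f x)) Q μ)
  (hexp_neg : IntegrableOn (fun x => exp (-f x)) Q μ)
include hQ₀ hQ hf hexp hexp_neg

theorem one_le_setAverage_exp_mul_setAverage_exp_neg :
    1 ≤ (⨍ x in Q, exp (f x) ∂μ) * ⨍ x in Q, exp (-f x) ∂μ := by
  have hA := one_le_exp_neg_setAverage_mul_setAverage_exp hQ₀ hQ hf hexp
  have hB := one_le_exp_setAverage_mul_setAverage_exp_neg hQ₀ hQ hf hexp_neg
  calc (1 : ℝ) ≤ (exp (-⨍ x in Q, f x ∂μ) * ⨍ x in Q, exp (f x) ∂μ) *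
        (exp (⨍ x in Q, f x ∂μ) * ⨍ x in Q, exp (-f x) ∂μ) := one_le_mul_of_one_le_of_one_le hA hB
    _ = _ := by rw [mul_mul_mul_comm, ← exp_add, neg_add_cancel, exp_zero, one_mul]

theorem setAverage_exp_abs_sub_setAverage_le :
    ⨍ x in Q, exp |f x - ⨍ y in Q, f y ∂μ| ∂μ ≤
      2 * ((⨍ x in Q, exp (f x) ∂μ) * ⨍ x in Q, exp (-f x) ∂μ) := by
  set c := ⨍ y in Q, f y ∂μ
  have hA := one_le_exp_neg_setAverage_mul_setAverage_exp hQ₀ hQ hf hexp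
  have hB := one_le_exp_setAverage_mul_setAverage_exp_neg hQ₀ hQ hf hexp_neg
  have hsplit : ∀ x, exp |f x - c| ≤ exp (-c) * exp (f x) + exp c * exp (-f x) := fun x => by
    rw [← exp_add, ← exp_add]
    rcases abs_cases (f x - c) with ⟨h, -⟩ | ⟨h, -⟩ <;> rw [h]
    · rw [show f x - c = -c + f x by ring]; linarith [exp_pos (c + -f x)]
    · rw [show -(f x - c) = c + -f x by ring]; linarith [exp_pos (-c + f x)]
  have hsum : ⨍ x in Q, exp |f x - c| ∂μ ≤
      exp (-c) * (⨍ x in Q, exp (f x) ∂μ) + exp c * ⨍ x in Q, exp (-f x) ∂μ := by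
    have hdom := (hexp.const_mul (exp (-c))).add (hexp_neg.const_mul (exp c))
    calc ⨍ x in Q, exp |f x - c| ∂μ = (μ.real Q)⁻¹ * ∫ x in Q, exp |f x - c| ∂μ := by
          rw [setAverage_eq, smul_eq_mul]
      _ ≤ (μ.real Q)⁻¹ * ∫ x in Q, (exp (-c) * exp (f x) + exp c * exp (-f x)) ∂μ := by
          refine mul_le_mul_of_nonneg_left ?_ (inv_nonneg.mpr measureReal_nonneg)
          exact integral_mono_of_nonneg (Filter.Eventually.of_forall fun x => (exp_pos _).le)
            hdom (Filter.Eventually.of_forall hsplit)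
      _ = _ := by
          rw [integral_add (hexp.const_mul _) (hexp_neg.const_mul _), integral_const_mul,
            integral_const_mul, setAverage_eq, setAverage_eq, smul_eq_mul, smul_eq_mul]
          ring
  have hprod : (exp (-c) * ⨍ x in Q, exp (f x) ∂μ) * (exp c * ⨍ x in Q, exp (-f x) ∂μ) =
      (⨍ x in Q, exp (f x) ∂μ) * ⨍ x in Q, exp (-f x) ∂μ := by
    rw [mul_mul_mul_comm, ← exp_add, neg_add_cancel, exp_zero, one_mul]
  nlinarith [mul_nonneg (sub_nonneg.mpr hA) (sub_nonneg.mpr hB)]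

end Centered

end SetAverage

section Cube

open Real

variable {n : ℕ} {f : (Fin n → ℝ) → ℝ} {Q : Set (Fin n → ℝ)}

theorem IsCube.isCompact (hQ : IsCube Q) : IsCompact Q := by
  obtain ⟨c, h, -, rfl⟩ := hQ
  exact isCompact_univ_pi fun _ => isCompact_Icc

theorem IsCube.volume_ne_zero (hQ : IsCube Q) : volume Q ≠ 0 := by
  obtain ⟨c, h, hh, rfl⟩ := hQ
  rw [volume_pi_pi, Finset.prod_ne_zero_iff]
  intro i _
  simp [hh]

theorem IsCube.volume_ne_top (hQ : IsCube Q) : volume Q ≠ ⊤ :=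
  hQ.isCompact.measure_ne_top

theorem apRatio_two_exp (f : (Fin n → ℝ) → ℝ) (Q : Set (Fin n → ℝ)) :
    apRatio 2 (fun x => exp (f x)) Q = (⨍ x in Q, exp (f x)) * ⨍ x in Q, exp (-f x) := by
  norm_num [apRatio, avgQ, avgm_eq_setAverage, rpow_neg_one, ← exp_neg]

theorem apRatio_two_exp_eq_zero_or_one_le (hf : LocallyIntegrable f volume) (hQ : IsCube Q) :
    apRatio 2 (fun x => exp (f x)) Q = 0 ∨ 1 ≤ apRatio 2 (fun x => exp (f x)) Q := by
  rw [apRatio_two_exp]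
  by_cases hexp : IntegrableOn (fun x => exp (f x)) Q volume
  · by_cases hexp_neg : IntegrableOn (fun x => exp (-f x)) Q volume
    · exact .inr <| one_le_setAverage_exp_mul_setAverage_exp_neg hQ.volume_ne_zero
        hQ.volume_ne_top (hf.integrableOn_isCompact hQ.isCompact) hexp hexp_neg
    · simp [setAverage_of_not_integrableOn hexp_neg]
  · simp [setAverage_of_not_integrableOn hexp]

/-- Averages of non-integrable functions are `0` here, so a cube on which `e^f` or `e^{-f}` is not
integrable has `A₂` ratio `0`; if every cube is like that, `[e^f]_{A₂} = 0` and `log₂ 0 = 0`. -/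
theorem zero_le_logb_apConst (hf : LocallyIntegrable f volume)
    (hA : MemAp 2 (fun x => exp (f x))) :
    0 ≤ logb 2 (apConst 2 (fun x => exp (f x))) := by
  by_cases h : ∃ Q, IsCube Q ∧ 1 ≤ apRatio 2 (fun x => exp (f x)) Q
  · obtain ⟨Q, hQ, h1⟩ := h
    exact logb_nonneg one_lt_two (h1.trans (le_csSup hA ⟨Q, hQ, rfl⟩))
  · push Not at h
    have hunit : IsCube (Set.univ.pi fun i => Set.Icc ((0 : Fin n → ℝ) i) (0 + 1)) :=
      ⟨0, 1, one_pos, rfl⟩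
    have hne : (apSet 2 (fun x => exp (f x))).Nonempty := ⟨_, _, hunit, rfl⟩
    have hzero : apSet 2 (fun x => exp (f x)) = {0} := by
      refine hne.subset_singleton_iff.mp ?_
      rintro r ⟨Q, hQ, rfl⟩
      exact (apRatio_two_exp_eq_zero_or_one_le hf hQ).resolve_right (h Q hQ).not_ge
    rw [apConst, hzero, csSup_singleton, logb_zero]

theorem oscExp_le_one_add_logb_apConst (hf : LocallyIntegrable f volume)
    (hA : MemAp 2 (fun x => exp (f x))) (hQ : IsCube Q) :
    oscExp Q f ≤ 1 + logb 2 (apConst 2 (fun x => exp (f x))) := by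
  set C := apConst 2 (fun x => exp (f x))
  have hlogC := zero_le_logb_apConst hf hA
  have hfQ := hf.integrableOn_isCompact hQ.isCompact
  have hQ₀ := hQ.volume_ne_zero
  have hQ' := hQ.volume_ne_top
  refine expLNorm_le_of_setAverage_exp_abs_le (g := fun x => f x - avgQ Q f) hQ₀ hQ'
    (hfQ.aestronglyMeasurable.sub aestronglyMeasurable_const) (by linarith) ?_
  rw [avgQ, avgm_eq_setAverage]
  by_cases hI : IntegrableOn (fun x => exp |f x - ⨍ y in Q, f y|) Q volume
  · have hexp := hI.exp_of_exp_abs_sub hfQ.aestronglyMeasurable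
    have hexp_neg := IntegrableOn.exp_of_exp_abs_sub (f := fun x => -f x)
      (c := -⨍ y in Q, f y) hfQ.aestronglyMeasurable.neg
      (by simpa only [neg_sub_neg, abs_sub_comm] using hI)
    have hratio : (⨍ x in Q, exp (f x)) * (⨍ x in Q, exp (-f x)) ≤ C :=
      apRatio_two_exp f Q ▸ le_csSup hA ⟨Q, hQ, rfl⟩
    have hC : 0 < C := one_pos.trans_le <|
      (one_le_setAverage_exp_mul_setAverage_exp_neg hQ₀ hQ' hfQ hexp hexp_neg).trans hratio
    calc _ ≤ 2 * ((⨍ x in Q, exp (f x)) * ⨍ x in Q, exp (-f x)) :=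
          setAverage_exp_abs_sub_setAverage_le hQ₀ hQ' hfQ hexp hexp_neg
      _ ≤ 2 * C := by linarith
      _ = 2 ^ (1 + logb 2 C) := by
          rw [rpow_add two_pos, rpow_one, rpow_logb two_pos (by norm_num) hC]
  · rw [setAverage_of_not_integrableOn hI]
    positivity

end Cube

/-- If `e^f ∈ A₂` then `f ∈ 𝒷ℳ𝒪` with `‖f‖_{𝒷ℳ𝒪} ≤ 1 + log₂ [e^f]_{A₂}`. -/
theorem statement5 {n : ℕ} (f : (Fin n → ℝ) → ℝ)
    (hf : LocallyIntegrable f MeasureTheory.volume)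
    (hA : MemAp 2 (fun x => Real.exp (f x))) :
    FiniteBMO f ∧
    calBMONorm f ≤ 1 + Real.logb 2 (apConst 2 (fun x => Real.exp (f x))) := by
  have hbound : ∀ r ∈ bmoSet f, r ≤ 1 + Real.logb 2 (apConst 2 (fun x => Real.exp (f x))) := by
    rintro r ⟨Q, hQ, rfl⟩
    exact oscExp_le_one_add_logb_apConst hf hA hQ
  exact ⟨⟨_, hbound⟩, Real.sSup_le hbound (by linarith [zero_le_logb_apConst hf hA])⟩
end
end

section
/- Let f be a real-valued locally integrable function and ℬ a basis of sets. Then e^f ∈ A_{2,ℬ} (the A₂ class defined with averages over sets in ℬ) if and only if C₀ := sup_{B ∈ ℬ} avg_B e^{|f - f_B|} < ∞. Moreover, if e^f ∈ A_{2,ℬ} then C₀ ≤ 2[e^f]_{A_{2,ℬ}}. -/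
/-!
Write `c = f_B` and `A(·)` for the average over `B`. Pointwise `e^{|f-c|} ≤ e^{-c} e^f + e^c e^{-f}`,
and Jensen's inequality gives `e^c ≤ A(e^f)` and `e^{-c} ≤ A(e^{-f})`; averaging therefore yields
`A(e^{|f-c|}) ≤ 2 A(e^f) A(e^{-f})`. Conversely `e^{±f} ≤ e^{±c} e^{|f-c|}` gives
`A(e^f) A(e^{-f}) ≤ A(e^{|f-c|})²`.
-/

open MeasureTheory

noncomputable section

open ProbabilityTheory Real

lemma Real.exp_le_exp_mul_exp_abs_sub (t c : ℝ) : exp t ≤ exp c * exp |t - c| := by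
  rw [← exp_add]
  exact exp_le_exp.2 (by linarith [le_abs_self (t - c)])

lemma Real.exp_neg_le_exp_neg_mul_exp_abs_sub (t c : ℝ) : exp (-t) ≤ exp (-c) * exp |t - c| := by
  have := exp_le_exp_mul_exp_abs_sub (-t) (-c)
  rwa [neg_sub_neg, abs_sub_comm] at this

lemma Real.exp_abs_sub_le (t c : ℝ) : exp |t - c| ≤ exp (-c) * exp t + exp c * exp (-t) := by
  simpa [← exp_add, sub_eq_add_neg, add_comm] using exp_abs_le (t - c)

section Integral

variable {α : Type*} [MeasurableSpace α] {μ : Measure α} {g : α → ℝ}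

lemma integrable_exp_abs_sub_iff [IsFiniteMeasure μ] (hg : AEStronglyMeasurable g μ) (c : ℝ) :
    Integrable (fun x => exp |g x - c|) μ ↔
      Integrable (fun x => exp (g x)) μ ∧ Integrable (fun x => exp (-g x)) μ := by
  constructor
  · intro h
    refine ⟨(h.const_mul (exp c)).mono' (by fun_prop) (ae_of_all _ fun x => ?_),
      (h.const_mul (exp (-c))).mono' (by fun_prop) (ae_of_all _ fun x => ?_)⟩
    · rw [norm_of_nonneg (exp_nonneg _)]
      exact exp_le_exp_mul_exp_abs_sub _ _
    · rw [norm_of_nonneg (exp_nonneg _)]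
      exact exp_neg_le_exp_neg_mul_exp_abs_sub _ _
  · rintro ⟨hpos, hneg⟩
    refine ((hpos.const_mul (exp (-c))).add (hneg.const_mul (exp c))).mono' (by fun_prop)
      (ae_of_all _ fun x => ?_)
    rw [norm_of_nonneg (exp_nonneg _)]
    exact exp_abs_sub_le _ _

lemma integral_exp_abs_sub_integral_le [IsProbabilityMeasure μ] (hg : AEStronglyMeasurable g μ) :
    ∫ x, exp |g x - ∫ y, g y ∂μ| ∂μ ≤
      2 * ((∫ x, exp (g x) ∂μ) * ∫ x, exp (-g x) ∂μ) := by
  set c := ∫ y, g y ∂μ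
  have hpos₀ : 0 ≤ ∫ x, exp (g x) ∂μ := integral_nonneg fun _ => exp_nonneg _
  have hneg₀ : 0 ≤ ∫ x, exp (-g x) ∂μ := integral_nonneg fun _ => exp_nonneg _
  by_cases h : Integrable (fun x => exp |g x - c|) μ
  swap
  · rw [integral_undef h]
    positivity
  obtain ⟨hpos, hneg⟩ := (integrable_exp_abs_sub_iff hg c).1 h
  have hgi : Integrable g μ := (hpos.add hneg).mono' hg (ae_of_all _ fun x => by
    rw [norm_eq_abs, Pi.add_apply]
    linarith [add_one_le_exp |g x|, exp_abs_le (g x)])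
  have jensen : ∀ {φ : α → ℝ}, Integrable φ μ → Integrable (fun x => exp (φ x)) μ →
      exp (∫ x, φ x ∂μ) ≤ ∫ x, exp (φ x) ∂μ := fun hφ hexp =>
    convexOn_exp.map_integral_le continuous_exp.continuousOn isClosed_univ
      (ae_of_all _ fun _ => Set.mem_univ _) hφ hexp
  have hexp_c : exp c ≤ ∫ x, exp (g x) ∂μ := jensen hgi hpos
  have hexp_neg_c : exp (-c) ≤ ∫ x, exp (-g x) ∂μ := by
    simpa only [integral_neg] using jensen (φ := fun x => -g x) hgi.neg hneg
  calc ∫ x, exp |g x - c| ∂μ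
      ≤ ∫ x, (exp (-c) * exp (g x) + exp c * exp (-g x)) ∂μ :=
        integral_mono h ((hpos.const_mul _).add (hneg.const_mul _)) fun x => exp_abs_sub_le _ _
    _ = exp (-c) * (∫ x, exp (g x) ∂μ) + exp c * ∫ x, exp (-g x) ∂μ := by
        rw [integral_add (hpos.const_mul _) (hneg.const_mul _), integral_const_mul,
          integral_const_mul]
    _ ≤ (∫ x, exp (-g x) ∂μ) * (∫ x, exp (g x) ∂μ) + (∫ x, exp (g x) ∂μ) * ∫ x, exp (-g x) ∂μ := by
        gcongr
    _ = 2 * ((∫ x, exp (g x) ∂μ) * ∫ x, exp (-g x) ∂μ) := by ring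

lemma integral_exp_mul_integral_exp_neg_le [IsFiniteMeasure μ] (hg : AEStronglyMeasurable g μ)
    (c : ℝ) :
    (∫ x, exp (g x) ∂μ) * (∫ x, exp (-g x) ∂μ) ≤ (∫ x, exp |g x - c| ∂μ) ^ 2 := by
  by_cases h : Integrable (fun x => exp |g x - c|) μ
  swap
  · rw [integrable_exp_abs_sub_iff hg c, not_and_or] at h
    rcases h with h | h <;> simp [integral_undef h, sq_nonneg]
  obtain ⟨hpos, hneg⟩ := (integrable_exp_abs_sub_iff hg c).1 h
  have hpos_le : ∫ x, exp (g x) ∂μ ≤ exp c * ∫ x, exp |g x - c| ∂μ := by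
    rw [← integral_const_mul]
    exact integral_mono hpos (h.const_mul _) fun x => exp_le_exp_mul_exp_abs_sub _ _
  have hneg_le : ∫ x, exp (-g x) ∂μ ≤ exp (-c) * ∫ x, exp |g x - c| ∂μ := by
    rw [← integral_const_mul]
    exact integral_mono hneg (h.const_mul _) fun x => exp_neg_le_exp_neg_mul_exp_abs_sub _ _
  calc (∫ x, exp (g x) ∂μ) * (∫ x, exp (-g x) ∂μ)
      ≤ (exp c * ∫ x, exp |g x - c| ∂μ) * (exp (-c) * ∫ x, exp |g x - c| ∂μ) :=
        mul_le_mul hpos_le hneg_le (integral_nonneg fun _ => exp_nonneg _) (by positivity)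
    _ = (∫ x, exp |g x - c| ∂μ) ^ 2 := by
        rw [mul_mul_mul_comm, ← exp_add, add_neg_cancel, exp_zero, one_mul, sq]

lemma avgm_eq_integral_cond (B : Set α) (g : α → ℝ) : avgm μ B g = ∫ x, g x ∂μ[|B] := by
  simp [avgm, ProbabilityTheory.cond, integral_smul_measure, ENNReal.toReal_inv]

end Integral

section Supremum

variable {ι : Type*} {s : Set ι} {F G : ι → ℝ}

lemma BddAbove.of_le_comp {φ : ℝ → ℝ} (hφ : Monotone φ) (h : ∀ i ∈ s, F i ≤ φ (G i))
    (hG : BddAbove {r | ∃ i ∈ s, r = G i}) : BddAbove {r | ∃ i ∈ s, r = F i} := by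
  obtain ⟨M, hM⟩ := hG
  exact ⟨φ M, by rintro _ ⟨i, hi, rfl⟩; exact (h i hi).trans (hφ (hM ⟨i, hi, rfl⟩))⟩

lemma sSup_le_mul_sSup_of_le {k : ℝ} (hk : 0 ≤ k) (h : ∀ i ∈ s, F i ≤ k * G i)
    (hG : BddAbove {r | ∃ i ∈ s, r = G i}) :
    sSup {r | ∃ i ∈ s, r = F i} ≤ k * sSup {r | ∃ i ∈ s, r = G i} := by
  rcases s.eq_empty_or_nonempty with rfl | ⟨i₀, hi₀⟩
  · simp
  refine csSup_le ⟨F i₀, i₀, hi₀, rfl⟩ ?_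
  rintro _ ⟨i, hi, rfl⟩
  exact (h i hi).trans (mul_le_mul_of_nonneg_left (le_csSup hG ⟨i, hi, rfl⟩) hk)

end Supremum

/-- `e^f ∈ A_{2,ℬ}` iff `C₀ := sup_{B ∈ ℬ} avg_B e^{|f - f_B|} < ∞`; moreover if
`e^f ∈ A_{2,ℬ}` then `C₀ ≤ 2 [e^f]_{A_{2,ℬ}}`. -/
theorem statement6 {n : ℕ} (f : (Fin n → ℝ) → ℝ)
    (hf : LocallyIntegrable f MeasureTheory.volume)
    (ℬ : Set (Set (Fin n → ℝ)))
    (hℬ : ∀ B ∈ ℬ, MeasurableSet B ∧ 0 < MeasureTheory.volume B ∧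
      MeasureTheory.volume B < ⊤) :
    (BddAbove {r : ℝ | ∃ B ∈ ℬ,
        r = avgQ B (fun x => Real.exp (f x)) *
            avgQ B (fun x => (Real.exp (f x))⁻¹)} ↔
     BddAbove {r : ℝ | ∃ B ∈ ℬ, r = avgQ B (fun x => Real.exp |f x - avgQ B f|)}) ∧
    (BddAbove {r : ℝ | ∃ B ∈ ℬ,
        r = avgQ B (fun x => Real.exp (f x)) *
            avgQ B (fun x => (Real.exp (f x))⁻¹)} →
      sSup {r : ℝ | ∃ B ∈ ℬ, r = avgQ B (fun x => Real.exp |f x - avgQ B f|)} ≤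
        2 * sSup {r : ℝ | ∃ B ∈ ℬ,
            r = avgQ B (fun x => Real.exp (f x)) *
                avgQ B (fun x => (Real.exp (f x))⁻¹)}) := by
  have hprob : ∀ B ∈ ℬ, IsProbabilityMeasure (volume[|B]) := fun B hB =>
    cond_isProbabilityMeasure_of_finite (hℬ B hB).2.1.ne' (hℬ B hB).2.2.ne
  have hfm : ∀ B, AEStronglyMeasurable f (volume[|B]) := fun B =>
    hf.aestronglyMeasurable.mono_ac cond_absolutelyContinuous
  have hosc : ∀ B ∈ ℬ, avgQ B (fun x => exp |f x - avgQ B f|) ≤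
      2 * (avgQ B (fun x => exp (f x)) * avgQ B (fun x => (exp (f x))⁻¹)) := fun B hB => by
    have := hprob B hB
    simpa only [avgQ, avgm_eq_integral_cond, exp_neg] using
      integral_exp_abs_sub_integral_le (hfm B)
  have hsq : ∀ B ∈ ℬ, avgQ B (fun x => exp (f x)) * avgQ B (fun x => (exp (f x))⁻¹) ≤
      max (avgQ B (fun x => exp |f x - avgQ B f|)) 0 ^ 2 := fun B hB => by
    have := hprob B hB
    simp only [avgQ, avgm_eq_integral_cond, ← exp_neg]
    rw [max_eq_left (integral_nonneg fun _ => exp_nonneg _)]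
    exact integral_exp_mul_integral_exp_neg_le (hfm B) _
  have hmono : Monotone fun t : ℝ => max t 0 ^ 2 := fun s t hst =>
    pow_le_pow_left₀ (le_max_right _ _) (max_le_max_right 0 hst) 2
  exact ⟨⟨BddAbove.of_le_comp (monotone_mul_left_of_nonneg zero_le_two) hosc, BddAbove.of_le_comp hmono hsq⟩,
    sSup_le_mul_sSup_of_le zero_le_two hosc⟩
end
end
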